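/- arXiv:2605.05986 — 3 statements merged into one kernel-verified Lean document; each statement's English description precedes it below -/
import Mathlib

section
/- Let p > 0, β ∈ (0, 1/2], d ≥ 1 with p < d(1-β), t > 0, and define L_t(u) = Σ_{ℓ≥0} 2^{-pℓ} min( u^{1/(2β)}, (u/t)^{1/2} 2^{dℓ(1-β)} ). Then there is a constant C = C(p,β,d) > 0 such that for all u ∈ (0,1] and t ≥ 1: L_t(u) ≤ C · u^{1/(2β)} · min( 1, (u t^{β/(1-β)})^{-p/(2βd)} ). -/
/-!
With `A = u^{1/(2β)}`, `Y = (u/t)^{1/2} / A` and `m = d(1-β)`, the series is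
`A · Σ_ℓ min(r^ℓ, Y q^ℓ)` with `r = 2^{-p} < 1 < q = 2^{m-p}`. Splitting at the tipping
index `N = ⌈log₂(1/Y)/m⌉`, the part below `N` is a geometric sum of the increasing branch
and the part above it one of the decreasing branch; each is dominated by its term at `N`,
which is `≲ Y^{p/m} = (u t^{β/(1-β)})^{-p/(2βd)}`.
-/

/-- `L_t(u) = Σ_{ℓ≥0} 2^{-pℓ} min( u^{1/(2β)}, (u/t)^{1/2} 2^{dℓ(1-β)} )`. -/
noncomputable def Lfun (d : ℕ) (p β t u : ℝ) : ℝ :=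
  ∑' ℓ : ℕ, (2 : ℝ) ^ (-p * ℓ) *
    min (u ^ (1 / (2 * β))) ((u / t) ^ ((1 : ℝ) / 2) * 2 ^ ((d : ℝ) * ℓ * (1 - β)))

open Real Finset

section TwoRegimeSum

variable {r q Y : ℝ}

lemma summable_min_geometric (hr0 : 0 ≤ r) (hr1 : r < 1) (hY : 0 ≤ Y) (hq : 0 ≤ q) :
    Summable fun ℓ : ℕ => min (r ^ ℓ) (Y * q ^ ℓ) :=
  (summable_geometric_of_lt_one hr0 hr1).of_nonneg_of_le
    (fun ℓ => le_min (by positivity) (by positivity)) fun ℓ => min_le_left _ _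

lemma tsum_min_geometric_le_one_sub_inv (hr0 : 0 ≤ r) (hr1 : r < 1) (hY : 0 ≤ Y)
    (hq : 0 ≤ q) :
    ∑' ℓ : ℕ, min (r ^ ℓ) (Y * q ^ ℓ) ≤ (1 - r)⁻¹ := by
  rw [← tsum_geometric_of_lt_one hr0 hr1]
  exact (summable_min_geometric hr0 hr1 hY hq).tsum_le_tsum (fun ℓ => min_le_left _ _)
    (summable_geometric_of_lt_one hr0 hr1)

lemma tsum_min_geometric_le (hr0 : 0 ≤ r) (hr1 : r < 1) (hq : 1 < q) (hY : 0 ≤ Y) (N : ℕ) :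
    ∑' ℓ : ℕ, min (r ^ ℓ) (Y * q ^ ℓ) ≤ Y * q ^ N / (q - 1) + r ^ N / (1 - r) := by
  rw [← (summable_min_geometric hr0 hr1 hY (by linarith)).sum_add_tsum_nat_add N]
  gcongr
  · calc ∑ ℓ ∈ range N, min (r ^ ℓ) (Y * q ^ ℓ)
        ≤ ∑ ℓ ∈ range N, Y * q ^ ℓ := sum_le_sum fun ℓ _ => min_le_right _ _
      _ = Y * (q ^ N - 1) / (q - 1) := by rw [← mul_sum, geom_sum_eq hq.ne', mul_div_assoc]
      _ ≤ Y * q ^ N / (q - 1) := by gcongr; linarith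
  · calc ∑' ℓ : ℕ, min (r ^ (ℓ + N)) (Y * q ^ (ℓ + N))
        ≤ ∑' ℓ : ℕ, r ^ N * r ^ ℓ :=
          ((summable_nat_add_iff N).mpr (summable_min_geometric hr0 hr1 hY (by linarith))
            ).tsum_le_tsum (fun ℓ => (min_le_left _ _).trans_eq (by ring))
            ((summable_geometric_of_lt_one hr0 hr1).mul_left _)
      _ = r ^ N / (1 - r) := by
        rw [tsum_mul_left, tsum_geometric_of_lt_one hr0 hr1, div_eq_mul_inv]

end TwoRegimeSum

lemma two_rpow_mul_min_eq (p m Y : ℝ) (ℓ : ℕ) :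
    (2 : ℝ) ^ (-p * ℓ) * min 1 (Y * 2 ^ (m * ℓ)) =
      min (((2 : ℝ) ^ (-p)) ^ ℓ) (Y * ((2 : ℝ) ^ (m - p)) ^ ℓ) := by
  rw [mul_min_of_nonneg _ _ (by positivity), mul_one, mul_left_comm, ← rpow_add two_pos,
    ← rpow_mul_natCast zero_le_two, ← rpow_mul_natCast zero_le_two]
  ring_nf

noncomputable def dyadicSplitConst (p m : ℝ) : ℝ :=
  2 ^ (m - p) / (2 ^ (m - p) - 1) + (1 - 2 ^ (-p))⁻¹

lemma dyadicSplitConst_pos {p m : ℝ} (hp : 0 < p) (hpm : p ≤ m) : 0 < dyadicSplitConst p m :=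
  add_pos_of_nonneg_of_pos
    (div_nonneg (by positivity) (sub_nonneg.mpr (one_le_rpow one_le_two (by linarith))))
    (inv_pos.mpr (sub_pos.mpr (rpow_lt_one_of_one_lt_of_neg one_lt_two (neg_neg_of_pos hp))))

lemma tsum_two_rpow_mul_min_le {p m Y : ℝ} (hp : 0 < p) (hpm : p < m) (hY : 0 < Y) :
    ∑' ℓ : ℕ, (2 : ℝ) ^ (-p * ℓ) * min 1 (Y * 2 ^ (m * ℓ)) ≤
      dyadicSplitConst p m * min 1 (Y ^ (p / m)) := by
  have hm : 0 < m := hp.trans hpm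
  have hr0 : (0 : ℝ) ≤ 2 ^ (-p) := by positivity
  have hr1 : (2 : ℝ) ^ (-p) < 1 := rpow_lt_one_of_one_lt_of_neg one_lt_two (by linarith)
  have hq : (1 : ℝ) < 2 ^ (m - p) := one_lt_rpow one_lt_two (by linarith)
  simp_rw [two_rpow_mul_min_eq]
  rcases le_or_gt 1 Y with hY1 | hY1
  · rw [min_eq_left (one_le_rpow hY1 (by positivity)), mul_one, dyadicSplitConst]
    exact (tsum_min_geometric_le_one_sub_inv hr0 hr1 hY.le (by positivity)).trans
      (le_add_of_nonneg_left (div_nonneg (by positivity) (by linarith)))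
  set s := -logb 2 Y / m
  have hs : 0 ≤ s := div_nonneg (neg_nonneg.mpr (logb_nonpos one_lt_two hY.le hY1.le)) hm.le
  have hYs : Y = 2 ^ (-m * s) := by
    rw [show -m * s = logb 2 Y by simp only [s]; field_simp, rpow_logb two_pos (by norm_num) hY]
  have hYpm : Y ^ (p / m) = 2 ^ (-p * s) := by
    rw [hYs, ← rpow_mul zero_le_two]
    congr 1
    field_simp
  rw [hYpm, min_eq_right (rpow_le_one_of_one_le_of_nonpos one_le_two (by nlinarith))]
  have hr : ((2 : ℝ) ^ (-p)) ^ ⌈s⌉₊ ≤ 2 ^ (-p * s) := by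
    rw [← rpow_mul_natCast zero_le_two]
    exact rpow_le_rpow_of_exponent_le one_le_two (by nlinarith [Nat.le_ceil s])
  have hYq : Y * ((2 : ℝ) ^ (m - p)) ^ ⌈s⌉₊ ≤ 2 ^ (m - p) * 2 ^ (-p * s) := by
    rw [hYs, ← rpow_mul_natCast zero_le_two, ← rpow_add two_pos, ← rpow_add two_pos]
    exact rpow_le_rpow_of_exponent_le one_le_two (by nlinarith [Nat.ceil_lt_add_one hs])
  calc _ ≤ _ := tsum_min_geometric_le hr0 hr1 hq hY.le ⌈s⌉₊
    _ ≤ 2 ^ (m - p) * 2 ^ (-p * s) / (2 ^ (m - p) - 1) + 2 ^ (-p * s) / (1 - 2 ^ (-p)) := by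
      gcongr
    _ = _ := by rw [dyadicSplitConst]; ring

lemma Lfun_eq_mul_tsum (d : ℕ) (p β t : ℝ) {u : ℝ} (hu : 0 < u) :
    Lfun d p β t u = u ^ (1 / (2 * β)) * ∑' ℓ : ℕ, (2 : ℝ) ^ (-p * ℓ) *
      min 1 ((u / t) ^ ((1 : ℝ) / 2) / u ^ (1 / (2 * β)) * 2 ^ (d * (1 - β) * ℓ)) := by
  have hA : 0 < u ^ (1 / (2 * β)) := rpow_pos_of_pos hu _
  rw [Lfun, ← tsum_mul_left]
  congr 1 with ℓ
  rw [mul_left_comm, mul_min_of_nonneg _ _ hA.le, mul_one, ← mul_assoc,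
    mul_div_cancel₀ _ hA.ne', show (d : ℝ) * ℓ * (1 - β) = d * (1 - β) * ℓ by ring]

lemma rpow_div_rpow_rpow_eq {d β p u t : ℝ} (hu : 0 < u) (ht : 0 < t) (hβ : β ≠ 0)
    (hd : d ≠ 0) (h1β : 1 - β ≠ 0) :
    ((u / t) ^ ((1 : ℝ) / 2) / u ^ (1 / (2 * β))) ^ (p / (d * (1 - β))) =
      (u * t ^ (β / (1 - β))) ^ (-p / (2 * β * d)) := by
  have hY : (u / t) ^ ((1 : ℝ) / 2) / u ^ (1 / (2 * β)) =
      u ^ ((1 : ℝ) / 2 - 1 / (2 * β)) * t ^ (-((1 : ℝ) / 2)) := by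
    rw [div_rpow hu.le ht.le, rpow_sub hu, rpow_neg ht.le]
    ring
  rw [hY, mul_rpow (by positivity) (by positivity), mul_rpow hu.le (by positivity),
    ← rpow_mul hu.le, ← rpow_mul ht.le, ← rpow_mul ht.le]
  congr 2
  · field_simp; ring
  · field_simp

theorem stmt3_general (d : ℕ) (p β : ℝ) (hp : 0 < p)
    (hβ : β ∈ Set.Ioc (0 : ℝ) (1 / 2)) (h : p < (d : ℝ) * (1 - β)) :
    ∃ C > (0 : ℝ), ∀ u ∈ Set.Ioc (0 : ℝ) 1, ∀ t ≥ (1 : ℝ),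
      Lfun d p β t u ≤ C * u ^ (1 / (2 * β)) *
        min 1 ((u * t ^ (β / (1 - β))) ^ (-p / (2 * β * d))) := by
  have hm : 0 < (d : ℝ) * (1 - β) := hp.trans h
  refine ⟨_, dyadicSplitConst_pos hp h.le, fun u ⟨hu, _⟩ t ht => ?_⟩
  have ht0 : 0 < t := one_pos.trans_le ht
  rw [Lfun_eq_mul_tsum d p β t hu, mul_comm _ (u ^ _), mul_assoc,
    ← rpow_div_rpow_rpow_eq hu ht0 hβ.1.ne' (left_ne_zero_of_mul hm.ne')
      (right_ne_zero_of_mul hm.ne')]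
  gcongr
  exact tsum_two_rpow_mul_min_le hp h (by positivity)

theorem stmt3 (d : ℕ) (hd : 1 ≤ d) (p β : ℝ) (hp : 0 < p)
    (hβ : β ∈ Set.Ioc (0 : ℝ) (1 / 2)) (h : p < (d : ℝ) * (1 - β)) :
    ∃ C > (0 : ℝ), ∀ u ∈ Set.Ioc (0 : ℝ) 1, ∀ t ≥ (1 : ℝ),
      Lfun d p β t u ≤ C * u ^ (1 / (2 * β)) *
        min 1 ((u * t ^ (β / (1 - β))) ^ (-p / (2 * β * d))) :=
  stmt3_general d p β hp hβ h
end

section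
/- Let p > 0, β ∈ (0, 1/2], d ≥ 1 with p = d(1-β), t > 0, and L_t(u) = Σ_{ℓ≥0} 2^{-pℓ} min( u^{1/(2β)}, (u/t)^{1/2} 2^{dℓ(1-β)} ). Then there is a constant C = C(p,β,d) > 0 such that for all u, t > 0: L_t(u) ≤ C · (u/t)^{1/2} · (1 + (log(u t^{β/(1-β)}))^+). -/
open Real

theorem tsum_le_mul_add_geometric_tail {f : ℕ → ℝ} {A B r : ℝ} (hf : ∀ n, 0 ≤ f n)
    (hfB : ∀ n, f n ≤ B) (hfA : ∀ n, f n ≤ A * r ^ n) (hr₀ : 0 ≤ r) (hr₁ : r < 1) (N : ℕ) :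
    ∑' n, f n ≤ N * B + A * r ^ N * (1 - r)⁻¹ := by
  have hgeom := summable_geometric_of_lt_one hr₀ hr₁
  have hsum : Summable f := .of_nonneg_of_le hf hfA (hgeom.mul_left A)
  rw [← hsum.sum_add_tsum_nat_add N]
  gcongr
  · simpa using Finset.sum_le_card_nsmul (Finset.range N) f B fun n _ => hfB n
  · calc ∑' n, f (n + N) ≤ ∑' n, A * r ^ N * r ^ n :=
          Summable.tsum_le_tsum (fun n => (hfA (n + N)).trans_eq (by ring))
            ((summable_nat_add_iff N).mpr hsum) (hgeom.mul_left _)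
      _ = A * r ^ N * (1 - r)⁻¹ := by rw [tsum_mul_left, tsum_geometric_of_lt_one hr₀ hr₁]

theorem Lfun_le {d : ℕ} {p β t u : ℝ} (hp : 0 < p) (h : p = d * (1 - β)) (hu : 0 ≤ u)
    (ht : 0 ≤ t) (N : ℕ) :
    Lfun d p β t u ≤ N * (u / t) ^ ((1 : ℝ) / 2) +
      u ^ (1 / (2 * β)) * (2 : ℝ) ^ (-p * N) * (1 - 2 ^ (-p))⁻¹ := by
  set A := u ^ (1 / (2 * β))
  set B := (u / t) ^ ((1 : ℝ) / 2)
  have hpow : ∀ x : ℝ, (2 : ℝ) ^ (-p * x) = ((2 : ℝ) ^ (-p)) ^ x := fun x =>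
    rpow_mul zero_le_two _ _
  rw [hpow N, rpow_natCast]
  refine tsum_le_mul_add_geometric_tail (fun n : ℕ => by positivity) (fun n : ℕ => ?_)
    (fun n : ℕ => ?_) (by positivity)
    (rpow_lt_one_of_one_lt_of_neg one_lt_two (neg_lt_zero.mpr hp)) N
  · have hexp : (d : ℝ) * n * (1 - β) = p * n := by rw [h]; ring
    calc (2 : ℝ) ^ (-p * n) * min A (B * 2 ^ ((d : ℝ) * n * (1 - β)))
          ≤ 2 ^ (-p * n) * (B * 2 ^ (p * n)) := by rw [hexp]; gcongr; exact min_le_right _ _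
      _ = B := by
          rw [mul_left_comm, ← rpow_add zero_lt_two, neg_mul, neg_add_cancel, rpow_zero, mul_one]
  · calc (2 : ℝ) ^ (-p * n) * min A (B * 2 ^ ((d : ℝ) * n * (1 - β))) ≤ 2 ^ (-p * n) * A := by
          gcongr; exact min_le_left _ _
      _ = A * (2 ^ (-p)) ^ n := by rw [hpow, rpow_natCast, mul_comm]

theorem rpow_one_div_two_mul_eq {β t u : ℝ} (hβ₀ : 0 < β) (hβ₁ : β < 1) (hu : 0 < u)
    (ht : 0 < t) :
    u ^ (1 / (2 * β)) =
      (u / t) ^ ((1 : ℝ) / 2) * (u * t ^ (β / (1 - β))) ^ ((1 - β) / (2 * β)) := by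
  have h1β : 1 - β ≠ 0 := by linarith
  have hexp_t : β / (1 - β) * ((1 - β) / (2 * β)) = 1 / 2 := by field_simp
  have hexp_u : (1 : ℝ) / (2 * β) = 1 / 2 + (1 - β) / (2 * β) := by field_simp; ring
  rw [mul_rpow hu.le (by positivity), ← rpow_mul ht.le, hexp_t, div_rpow hu.le ht.le, hexp_u,
    rpow_add hu]
  have : t ^ ((1 : ℝ) / 2) ≠ 0 := by positivity
  field_simp

theorem rpow_le_two_rpow_of_mul_max_log_le {x q s : ℝ} (hx : 0 < x) (hq : 0 ≤ q)
    (h : q * max (log x) 0 ≤ s * log 2) : x ^ q ≤ 2 ^ s := by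
  rw [rpow_def_of_pos hx, rpow_def_of_pos zero_lt_two]
  refine exp_le_exp.mpr ?_
  calc log x * q ≤ q * max (log x) 0 := by rw [mul_comm]; gcongr; exact le_max_left _ _
    _ ≤ log 2 * s := by linarith

theorem rpow_one_div_two_mul_mul_two_rpow_neg_le {β t u s : ℝ} (hβ₀ : 0 < β) (hβ₁ : β < 1)
    (hu : 0 < u) (ht : 0 < t)
    (hs : (1 - β) / (2 * β) * max (log (u * t ^ (β / (1 - β)))) 0 ≤ s * log 2) :
    u ^ (1 / (2 * β)) * (2 : ℝ) ^ (-s) ≤ (u / t) ^ ((1 : ℝ) / 2) := by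
  have hq : 0 ≤ (1 - β) / (2 * β) := div_nonneg (by linarith) (by linarith)
  calc u ^ (1 / (2 * β)) * (2 : ℝ) ^ (-s) ≤ (u / t) ^ ((1 : ℝ) / 2) * 2 ^ s * 2 ^ (-s) := by
        rw [rpow_one_div_two_mul_eq hβ₀ hβ₁ hu ht]
        gcongr
        exact rpow_le_two_rpow_of_mul_max_log_le (by positivity) hq hs
    _ = (u / t) ^ ((1 : ℝ) / 2) := by
        rw [mul_assoc, ← rpow_add zero_lt_two, add_neg_cancel, rpow_zero, mul_one]

theorem stmt4_general (d : ℕ) (p β : ℝ) (hp : 0 < p)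
    (hβ : β ∈ Set.Ioc (0 : ℝ) (1 / 2)) (h : p = (d : ℝ) * (1 - β)) :
    ∃ C > (0 : ℝ), ∀ u > (0 : ℝ), ∀ t > (0 : ℝ),
      Lfun d p β t u ≤ C * (u / t) ^ ((1 : ℝ) / 2) *
        (1 + max (Real.log (u * t ^ (β / (1 - β)))) 0) := by
  obtain ⟨hβ₀, hβ_le⟩ := hβ
  have hβ₁ : β < 1 := by linarith
  have hlog2 : 0 < log 2 := log_pos one_lt_two
  set c := (1 - β) / (2 * β) / (p * log 2)
  set K := (1 - (2 : ℝ) ^ (-p))⁻¹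
  have hc : 0 ≤ c := div_nonneg (div_nonneg (by linarith) (by linarith)) (by positivity)
  have hK : 0 < K := inv_pos.mpr <| sub_pos.mpr <|
    rpow_lt_one_of_one_lt_of_neg one_lt_two (neg_lt_zero.mpr hp)
  refine ⟨c + 1 + K, by positivity, fun u hu t ht => ?_⟩
  set B := (u / t) ^ ((1 : ℝ) / 2)
  set M := max (log (u * t ^ (β / (1 - β)))) 0
  have hB : 0 ≤ B := by positivity
  have hM : 0 ≤ M := le_max_right _ _
  set N := ⌈c * M⌉₊
  have hN : c * M ≤ N := Nat.le_ceil _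
  have hN' : (N : ℝ) ≤ c * M + 1 := (Nat.ceil_lt_add_one (by positivity)).le
  have htip : u ^ (1 / (2 * β)) * (2 : ℝ) ^ (-p * N) ≤ B := by
    rw [neg_mul]
    refine rpow_one_div_two_mul_mul_two_rpow_neg_le hβ₀ hβ₁ hu ht ?_
    calc (1 - β) / (2 * β) * M = p * log 2 * (c * M) := by simp only [c]; field_simp
      _ ≤ p * N * log 2 := by nlinarith [mul_pos hp hlog2]
  calc Lfun d p β t u ≤ N * B + u ^ (1 / (2 * β)) * (2 : ℝ) ^ (-p * N) * K :=
        Lfun_le hp h hu.le ht.le N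
    _ ≤ (c * M + 1) * B + B * K := by gcongr
    _ ≤ (c + 1 + K) * B * (1 + M) := by
        nlinarith [mul_nonneg hB hM, mul_nonneg (mul_nonneg hB hM) hK.le, mul_nonneg hc hB]

theorem stmt4 (d : ℕ) (hd : 1 ≤ d) (p β : ℝ) (hp : 0 < p)
    (hβ : β ∈ Set.Ioc (0 : ℝ) (1 / 2)) (h : p = (d : ℝ) * (1 - β)) :
    ∃ C > (0 : ℝ), ∀ u > (0 : ℝ), ∀ t > (0 : ℝ),
      Lfun d p β t u ≤ C * (u / t) ^ ((1 : ℝ) / 2) *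
        (1 + max (Real.log (u * t ^ (β / (1 - β)))) 0) :=
  stmt4_general d p β hp hβ h
end

section
/- Let (P_t) be a Markov semigroup such that for some θ_0 > 0 and constant c(θ_0) > 0, for every bounded Borel g : ℝ^d → ℝ the function P_{θ_0} g is Lipschitz with Lipschitz constant ≤ c(θ_0)‖g‖_sup; and suppose W_1(P_t(x,·), ν) ≤ ψ(x) e(t) for all t, x. Then for every Borel set A and every t ≥ θ_0, ‖P_t(x,·) − ν‖_{TV} ≤ c(θ_0) ψ(x) e(t − θ_0). -/
open MeasureTheory Set
open scoped ENNReal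

/-- The 1-Wasserstein distance, defined as the infimum over couplings of `∫ |x-y| dπ`
(with values in `ℝ≥0∞`). -/
noncomputable def Wasserstein1 {E : Type*} [MeasurableSpace E] [NormedAddCommGroup E]
    (μ ν : Measure E) : ℝ≥0∞ :=
  ⨅ (π : Measure (E × E)) (_ : π.map Prod.fst = μ ∧ π.map Prod.snd = ν),
    ∫⁻ z, (‖z.1 - z.2‖₊ : ℝ≥0∞) ∂π

/-! The semigroup property and invariance give `P_t 1_A (x) = ∫ f_A dP_{t-θ₀}(x,·)` and
`ν(A) = ∫ f_A dν` with `f_A = P_{θ₀} 1_A`, which is bounded and `c`-Lipschitz by the strong Feller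
hypothesis. Integrating `|f_A y - f_A z| ≤ c ‖y - z‖` against any coupling of `P_{t-θ₀}(x,·)` and
`ν` bounds the difference by `c` times the cost of the coupling, hence by `c W₁`. -/

section Kantorovich

variable {E : Type*} [MeasurableSpace E] [NormedAddCommGroup E] {f : E → ℝ} {M c : ℝ}

theorem ofReal_abs_integral_sub_le_of_coupling (π : Measure (E × E)) [IsFiniteMeasure π]
    (hf : Measurable f) (hbdd : ∀ y, |f y| ≤ M) (hc : 0 ≤ c)
    (hlip : ∀ a b, |f a - f b| ≤ c * dist a b) :
    ENNReal.ofReal |∫ z, f z.1 ∂π - ∫ z, f z.2 ∂π| ≤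
      ENNReal.ofReal c * ∫⁻ z, (‖z.1 - z.2‖₊ : ℝ≥0∞) ∂π := by
  have hint : ∀ g : E × E → E, Measurable g → Integrable (fun z ↦ f (g z)) π := fun g hg ↦
    (integrable_const M).mono' (hf.comp hg).aestronglyMeasurable
      (.of_forall fun z ↦ hbdd (g z))
  rw [← integral_sub (hint _ measurable_fst) (hint _ measurable_snd), ← Real.enorm_eq_ofReal_abs,
    ← lintegral_const_mul' _ _ ENNReal.ofReal_ne_top]
  refine (enorm_integral_le_lintegral_enorm _).trans (lintegral_mono fun z ↦ ?_)
  rw [Real.enorm_eq_ofReal_abs, ← enorm_eq_nnnorm, ← ofReal_norm, ← ENNReal.ofReal_mul hc,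
    ← dist_eq_norm]
  exact ENNReal.ofReal_le_ofReal (hlip z.1 z.2)

-- `0 < c` rather than `0 ≤ c`: without couplings `W₁ = ∞`, and `0 * ∞ = 0` in `ℝ≥0∞`.
theorem ofReal_abs_integral_sub_le_wasserstein1 (μ ν : Measure E) [IsFiniteMeasure μ]
    (hf : Measurable f) (hbdd : ∀ y, |f y| ≤ M) (hc : 0 < c)
    (hlip : ∀ a b, |f a - f b| ≤ c * dist a b) :
    ENNReal.ofReal |∫ y, f y ∂μ - ∫ y, f y ∂ν| ≤ ENNReal.ofReal c * Wasserstein1 μ ν := by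
  have hc₀ : ENNReal.ofReal c ≠ 0 := (ENNReal.ofReal_pos.mpr hc).ne'
  simp only [Wasserstein1, ENNReal.mul_iInf_of_ne hc₀ ENNReal.ofReal_ne_top]
  refine le_iInf₂ fun π ⟨hπ₁, hπ₂⟩ ↦ ?_
  have : IsFiniteMeasure (π.map Prod.fst) := hπ₁ ▸ ‹_›
  have : IsFiniteMeasure π := Measure.isFiniteMeasure_of_map measurable_fst.aemeasurable
  rw [← hπ₁, ← hπ₂, integral_map measurable_fst.aemeasurable hf.aestronglyMeasurable,
    integral_map measurable_snd.aemeasurable hf.aestronglyMeasurable]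
  exact ofReal_abs_integral_sub_le_of_coupling π hf hbdd hc.le hlip

end Kantorovich

theorem toReal_bind_apply {α β : Type*} [MeasurableSpace α] [MeasurableSpace β] {μ : Measure α}
    {κ : α → Measure β} (hκ : Measurable κ) {A : Set β} (hA : MeasurableSet A)
    (hκA : ∀ a, κ a A ≠ ∞) :
    (μ.bind κ A).toReal = ∫ a, (κ a A).toReal ∂μ := by
  rw [Measure.bind_apply hA hκ.aemeasurable,
    integral_toReal (Measure.measurable_measure.mp hκ A hA).aemeasurable
      (.of_forall fun a ↦ (hκA a).lt_top)]

theorem stmt14_general {d : ℕ}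
    (P : ℝ → EuclideanSpace ℝ (Fin d) → Measure (EuclideanSpace ℝ (Fin d)))
    (hprob : ∀ t x, IsProbabilityMeasure (P t x))
    (hmeas : ∀ t, Measurable (P t))
    (hsemi : ∀ s t : ℝ, 0 ≤ s → 0 ≤ t → ∀ x, (P s x).bind (P t) = P (s + t) x)
    (ν : Measure (EuclideanSpace ℝ (Fin d)))
    (hinv : ∀ t ≥ (0 : ℝ), ν.bind (P t) = ν)
    (θ0 c : ℝ) (hθ0 : 0 < θ0) (hc : 0 < c)
    -- Lipschitz strong Feller: for bounded Borel `g`, `P_{θ0} g` is `c‖g‖`-Lipschitz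
    (hLSF : ∀ g : EuclideanSpace ℝ (Fin d) → ℝ, Measurable g → ∀ M : ℝ,
      (∀ y, |g y| ≤ M) → ∀ x y,
        |(∫ z, g z ∂(P θ0 x)) - ∫ z, g z ∂(P θ0 y)| ≤ c * M * dist x y)
    (ψ : EuclideanSpace ℝ (Fin d) → ℝ) (hψ0 : ∀ x, 0 ≤ ψ x)
    (e : ℝ → ℝ) (he0 : ∀ t, 0 ≤ e t)
    -- `W_1(P_t(x,·), ν) ≤ ψ(x) e(t)`
    (hW1 : ∀ t ≥ (0 : ℝ), ∀ x, Wasserstein1 (P t x) ν ≤ ENNReal.ofReal (ψ x * e t)) :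
    ∀ A : Set (EuclideanSpace ℝ (Fin d)), MeasurableSet A → ∀ t ≥ θ0, ∀ x,
      |(P t x A).toReal - (ν A).toReal| ≤ c * ψ x * e (t - θ0) := by
  intro A hA t ht x
  have := hprob
  set f := fun z ↦ (P θ0 z A).toReal
  have hf : Measurable f := (Measure.measurable_measure.mp (hmeas θ0) A hA).ennreal_toReal
  have hbdd (z) : |f z| ≤ 1 := (abs_of_nonneg ENNReal.toReal_nonneg).trans_le measureReal_le_one
  have hlip (a b) : |f a - f b| ≤ c * dist a b := by
    simpa [f, integral_indicator_one hA, measureReal_def] using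
      hLSF (A.indicator 1) (measurable_const.indicator hA) 1
        (fun y ↦ by by_cases hy : y ∈ A <;> simp [hy]) a b
  have hPt : (P t x A).toReal = ∫ z, f z ∂P (t - θ0) x := by
    rw [← toReal_bind_apply (hmeas θ0) hA (fun _ ↦ measure_ne_top _ _),
      hsemi _ _ (sub_nonneg.2 ht) hθ0.le, sub_add_cancel]
  have hν : (ν A).toReal = ∫ z, f z ∂ν := by
    rw [← toReal_bind_apply (hmeas θ0) hA (fun _ ↦ measure_ne_top _ _), hinv θ0 hθ0.le]
  rw [hPt, hν, ← ENNReal.ofReal_le_ofReal_iff (by have := hψ0 x; have := he0 (t - θ0); positivity)]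
  calc ENNReal.ofReal |∫ z, f z ∂P (t - θ0) x - ∫ z, f z ∂ν|
      ≤ ENNReal.ofReal c * Wasserstein1 (P (t - θ0) x) ν :=
        ofReal_abs_integral_sub_le_wasserstein1 _ _ hf hbdd hc hlip
    _ ≤ ENNReal.ofReal c * ENNReal.ofReal (ψ x * e (t - θ0)) := by
        gcongr; exact hW1 _ (sub_nonneg.2 ht) x
    _ = ENNReal.ofReal (c * ψ x * e (t - θ0)) := by rw [mul_assoc, ENNReal.ofReal_mul hc.le]

theorem stmt14 {d : ℕ}
    (P : ℝ → EuclideanSpace ℝ (Fin d) → Measure (EuclideanSpace ℝ (Fin d)))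
    (hprob : ∀ t x, IsProbabilityMeasure (P t x))
    (hmeas : ∀ t, Measurable (P t))
    (hsemi : ∀ s t : ℝ, 0 ≤ s → 0 ≤ t → ∀ x, (P s x).bind (P t) = P (s + t) x)
    (ν : Measure (EuclideanSpace ℝ (Fin d))) [IsProbabilityMeasure ν]
    (hinv : ∀ t ≥ (0 : ℝ), ν.bind (P t) = ν)
    (θ0 c : ℝ) (hθ0 : 0 < θ0) (hc : 0 < c)
    -- Lipschitz strong Feller: for bounded Borel `g`, `P_{θ0} g` is `c‖g‖`-Lipschitz
    (hLSF : ∀ g : EuclideanSpace ℝ (Fin d) → ℝ, Measurable g → ∀ M : ℝ,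
      (∀ y, |g y| ≤ M) → ∀ x y,
        |(∫ z, g z ∂(P θ0 x)) - ∫ z, g z ∂(P θ0 y)| ≤ c * M * dist x y)
    (ψ : EuclideanSpace ℝ (Fin d) → ℝ) (hψ0 : ∀ x, 0 ≤ ψ x)
    (e : ℝ → ℝ) (he0 : ∀ t, 0 ≤ e t)
    -- `W_1(P_t(x,·), ν) ≤ ψ(x) e(t)`
    (hW1 : ∀ t ≥ (0 : ℝ), ∀ x, Wasserstein1 (P t x) ν ≤ ENNReal.ofReal (ψ x * e t)) :
    ∀ A : Set (EuclideanSpace ℝ (Fin d)), MeasurableSet A → ∀ t ≥ θ0, ∀ x,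
      |(P t x A).toReal - (ν A).toReal| ≤ c * ψ x * e (t - θ0) :=
  stmt14_general P hprob hmeas hsemi ν hinv θ0 c hθ0 hc hLSF ψ hψ0 e he0 hW1
end
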